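/- arXiv:1109.4319 — 2 statements merged into one kernel-verified Lean document; each statement's English description precedes it below -/
import Mathlib

section
/- Let B₁, B₂ ⊂ ℝ^p be compact infinite sets with diam(B₂) < d(B₁,B₂), and let s > 0. Define Ñ₁(N) to be the minimum over all N-point minimal s-energy configurations ω_N ⊂ B₁ ∪ B₂ of #(ω_N ∩ B₁). Then Ñ₁(N) → ∞ as N → ∞ (i.e., liminf_{N→∞} Ñ₁(N) = ∞). -/
open scoped Classical

noncomputable def rieszEnergy (p : ℕ) (s : ℝ) (ω : Finset (EuclideanSpace ℝ (Fin p))) : ℝ :=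
  ∑ x ∈ ω, ∑ y ∈ ω.erase x, dist x y ^ (-s)

noncomputable def setDist (p : ℕ) (A B : Set (EuclideanSpace ℝ (Fin p))) : ℝ :=
  sInf {d : ℝ | ∃ x ∈ A, ∃ y ∈ B, d = dist x y}

lemma rieszEnergy_nonneg (p : ℕ) (s : ℝ) (ω : Finset (EuclideanSpace ℝ (Fin p))) :
    0 ≤ rieszEnergy p s ω :=
  Finset.sum_nonneg fun _ _ => Finset.sum_nonneg fun _ _ => Real.rpow_nonneg dist_nonneg _

lemma rieszEnergy_insert (p : ℕ) (s : ℝ) (σ : Finset (EuclideanSpace ℝ (Fin p)))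
    {x : EuclideanSpace ℝ (Fin p)} (hx : x ∉ σ) :
    rieszEnergy p s (insert x σ) =
      rieszEnergy p s σ + 2 * ∑ w ∈ σ, dist x w ^ (-s) := by
  unfold rieszEnergy
  rw [Finset.sum_insert hx, Finset.erase_insert hx]
  have h : ∀ a ∈ σ, ∑ y ∈ (insert x σ).erase a, dist a y ^ (-s)
      = dist a x ^ (-s) + ∑ y ∈ σ.erase a, dist a y ^ (-s) := by
    intro a ha
    rw [Finset.erase_insert_of_ne (by rintro rfl; exact hx ha),
      Finset.sum_insert (fun h => hx (Finset.mem_of_mem_erase h))]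
  rw [Finset.sum_congr rfl h, Finset.sum_add_distrib]
  have h2 : ∑ a ∈ σ, dist a x ^ (-s) = ∑ a ∈ σ, dist x a ^ (-s) :=
    Finset.sum_congr rfl fun a _ => by rw [dist_comm]
  rw [h2]; ring

lemma rieszEnergy_erase (p : ℕ) (s : ℝ) (ω : Finset (EuclideanSpace ℝ (Fin p)))
    {y : EuclideanSpace ℝ (Fin p)} (hy : y ∈ ω) :
    rieszEnergy p s ω =
      rieszEnergy p s (ω.erase y) + 2 * ∑ w ∈ ω.erase y, dist y w ^ (-s) := by
  conv_lhs => rw [← Finset.insert_erase hy]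
  exact rieszEnergy_insert p s _ (Finset.notMem_erase y ω)

lemma rieszEnergy_image {N : ℕ} (p : ℕ) (s : ℝ) (v : Fin N → EuclideanSpace ℝ (Fin p))
    (hv : Function.Injective v) :
    rieszEnergy p s (Finset.image v Finset.univ) =
      ∑ i, ∑ j ∈ Finset.univ.erase i, dist (v i) (v j) ^ (-s) := by
  unfold rieszEnergy
  rw [Finset.sum_image (fun a _ b _ h => hv h)]
  refine Finset.sum_congr rfl fun i _ => ?_
  rw [← Finset.image_erase hv, Finset.sum_image (fun a _ b _ h => hv h)]

lemma exists_enum {N : ℕ} (p : ℕ) (ω : Finset (EuclideanSpace ℝ (Fin p)))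
    (h : ω.card = N) :
    ∃ v : Fin N → EuclideanSpace ℝ (Fin p),
      Function.Injective v ∧ Finset.image v Finset.univ = ω := by
  let e : Fin N ≃ ω := ((ω.equivFin).trans (finCongr h)).symm
  refine ⟨fun i => (e i : EuclideanSpace ℝ (Fin p)),
    Subtype.coe_injective.comp e.injective, ?_⟩
  ext x
  simp only [Finset.mem_image, Finset.mem_univ, true_and]
  constructor
  · rintro ⟨i, rfl⟩; exact (e i).2
  · intro hx; exact ⟨e.symm ⟨x, hx⟩, by simp⟩
set_option maxHeartbeats 1000000 in
lemma exists_min (p : ℕ) {s : ℝ} (hs : 0 < s) {K : Set (EuclideanSpace ℝ (Fin p))}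
    (hK : IsCompact K) (hinf : K.Infinite) (N : ℕ) :
    ∃ ω : Finset (EuclideanSpace ℝ (Fin p)), ↑ω ⊆ K ∧ ω.card = N ∧
      ∀ ω' : Finset (EuclideanSpace ℝ (Fin p)), ↑ω' ⊆ K → ω'.card = N →
        rieszEnergy p s ω ≤ rieszEnergy p s ω' := by
  obtain ⟨ω₀, hω₀K, hω₀card⟩ := hinf.exists_subset_card_eq N
  set C := rieszEnergy p s ω₀ with hCdef
  have hC0 : 0 ≤ C := rieszEnergy_nonneg p s ω₀
  set t₀ : ℝ := (C + 1) ^ (-(1/s)) with ht₀def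
  have ht₀ : 0 < t₀ := Real.rpow_pos_of_pos (by linarith) _
  have ht₀pow : t₀ ^ (-s) = C + 1 := by
    have h : (-(1/s)) * (-s) = 1 := by field_simp
    rw [ht₀def, ← Real.rpow_mul (by linarith : (0:ℝ) ≤ C + 1), h, Real.rpow_one]
  set g : (Fin N → EuclideanSpace ℝ (Fin p)) → ℝ := fun v =>
    ∑ i, ∑ j ∈ Finset.univ.erase i, (max (dist (v i) (v j)) t₀) ^ (-s) with hgdef
  -- g is below the energy for injective tuples
  have hgle : ∀ v : Fin N → EuclideanSpace ℝ (Fin p), Function.Injective v →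
      g v ≤ rieszEnergy p s (Finset.image v Finset.univ) := by
    intro v hv
    rw [rieszEnergy_image p s v hv]
    refine Finset.sum_le_sum fun i _ => Finset.sum_le_sum fun j hj => ?_
    have hne : v i ≠ v j := fun h => (Finset.ne_of_mem_erase hj).symm (hv h)
    exact Real.rpow_le_rpow_of_nonpos (dist_pos.mpr hne) (le_max_left _ _)
      (neg_nonpos.mpr hs.le)
  set S : Set (Fin N → EuclideanSpace ℝ (Fin p)) := Set.pi Set.univ (fun _ => K) with hSdef
  have hScomp : IsCompact S := isCompact_univ_pi fun _ => hK
  obtain ⟨k₀, hk₀⟩ := hinf.nonempty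
  have hSne : S.Nonempty := ⟨fun _ => k₀, fun i _ => hk₀⟩
  have hgc : ContinuousOn g S := by
    apply continuousOn_finset_sum
    intro i _
    apply continuousOn_finset_sum
    intro j _
    have h1 : Continuous fun v : Fin N → EuclideanSpace ℝ (Fin p) =>
        max (dist (v i) (v j)) t₀ :=
      ((continuous_apply i).dist (continuous_apply j)).max continuous_const
    have h2 : ContinuousOn (fun x : ℝ => x ^ (-s)) (Set.Ioi 0) := fun x hx =>
      (Real.continuousAt_rpow_const x (-s) (Or.inl (ne_of_gt hx))).continuousWithinAt
    exact h2.comp h1.continuousOn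
      (fun v _ => Set.mem_Ioi.mpr (lt_of_lt_of_le ht₀ (le_max_right _ _)))
  obtain ⟨v, hvS, hvmin⟩ := hScomp.exists_isMinOn hSne hgc
  -- g v ≤ C
  obtain ⟨v₀, hv₀inj, hv₀im⟩ := exists_enum p ω₀ hω₀card
  have hv₀S : v₀ ∈ S := by
    intro i _
    apply hω₀K
    rw [← hv₀im]
    exact Finset.mem_coe.mpr (Finset.mem_image_of_mem v₀ (Finset.mem_univ i))
  have hgvC : g v ≤ C := by
    calc g v ≤ g v₀ := hvmin hv₀S
    _ ≤ rieszEnergy p s (Finset.image v₀ Finset.univ) := hgle v₀ hv₀inj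
    _ = C := by rw [hv₀im]
  -- separation
  have hsepv : ∀ i j, i ≠ j → t₀ ≤ dist (v i) (v j) := by
    intro i j hij
    by_contra hlt
    push_neg at hlt
    have hterm : (max (dist (v i) (v j)) t₀) ^ (-s) = C + 1 := by
      rw [max_eq_right hlt.le, ht₀pow]
    have h1 : (max (dist (v i) (v j)) t₀) ^ (-s) ≤ g v := by
      have hj : j ∈ Finset.univ.erase i := Finset.mem_erase.mpr ⟨hij.symm, Finset.mem_univ j⟩
      calc (max (dist (v i) (v j)) t₀) ^ (-s)
          ≤ ∑ j' ∈ Finset.univ.erase i, (max (dist (v i) (v j')) t₀) ^ (-s) :=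
            Finset.single_le_sum (fun k _ => Real.rpow_nonneg
              (le_trans dist_nonneg (le_max_left _ _)) _) hj
        _ ≤ g v :=
            Finset.single_le_sum
              (f := fun k => ∑ j' ∈ Finset.univ.erase k, (max (dist (v k) (v j')) t₀) ^ (-s))
              (fun k _ => Finset.sum_nonneg fun l _ =>
                Real.rpow_nonneg (le_trans dist_nonneg (le_max_left _ _)) _)
              (Finset.mem_univ i)
    rw [hterm] at h1
    linarith
  have hvinj : Function.Injective v := by
    intro i j h
    by_contra hij
    have := hsepv i j hij
    rw [h, dist_self] at this
    linarith
  refine ⟨Finset.image v Finset.univ, ?_, ?_, ?_⟩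
  · intro x hx
    simp only [Finset.coe_image, Set.mem_image] at hx
    obtain ⟨i, _, rfl⟩ := hx
    exact hvS i (Set.mem_univ i)
  · rw [Finset.card_image_of_injective _ hvinj, Finset.card_univ, Fintype.card_fin]
  · intro ω' hω'K hω'card
    obtain ⟨v', hv'inj, hv'im⟩ := exists_enum p ω' hω'card
    have hv'S : v' ∈ S := by
      intro i _
      apply hω'K
      rw [← hv'im]
      exact Finset.mem_coe.mpr (Finset.mem_image_of_mem v' (Finset.mem_univ i))
    have key : rieszEnergy p s (Finset.image v Finset.univ) = g v := by
      rw [rieszEnergy_image p s v hvinj]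
      refine Finset.sum_congr rfl fun i _ => Finset.sum_congr rfl fun j hj => ?_
      rw [max_eq_left (hsepv i j (fun h => (Finset.ne_of_mem_erase hj).symm h) : t₀ ≤ _)]
    calc rieszEnergy p s (Finset.image v Finset.univ) = g v := key
      _ ≤ g v' := hvmin hv'S
      _ ≤ rieszEnergy p s (Finset.image v' Finset.univ) := hgle v' hv'inj
      _ = rieszEnergy p s ω' := by rw [hv'im]

/-- The minimal number of points that minimal configurations place on `B₁` tends to infinity. -/
theorem stmt5 (p : ℕ) (B₁ B₂ : Set (EuclideanSpace ℝ (Fin p)))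
    (h₁ : IsCompact B₁) (h₂ : IsCompact B₂) (hinf₁ : B₁.Infinite) (hinf₂ : B₂.Infinite)
    (hsep : Metric.diam B₂ < setDist p B₁ B₂) (s : ℝ) (hs : 0 < s) :
    Filter.Tendsto
      (fun N : ℕ =>
        sInf {m : ℕ | ∃ ω : Finset (EuclideanSpace ℝ (Fin p)),
          ↑ω ⊆ B₁ ∪ B₂ ∧ ω.card = N ∧
          (∀ ω' : Finset (EuclideanSpace ℝ (Fin p)), ↑ω' ⊆ B₁ ∪ B₂ → ω'.card = N →
            rieszEnergy p s ω ≤ rieszEnergy p s ω') ∧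
          m = (↑ω ∩ B₁ : Set (EuclideanSpace ℝ (Fin p))).ncard})
      Filter.atTop Filter.atTop := by
  set δ : ℝ := setDist p B₁ B₂ with hδdef
  set D : ℝ := Metric.diam B₂ with hDdef
  -- distances between the sets are at least δ
  have hδle : ∀ x ∈ B₁, ∀ y ∈ B₂, δ ≤ dist x y := by
    intro x hx y hy
    refine csInf_le ⟨0, ?_⟩ ⟨x, hx, y, hy, rfl⟩
    rintro d ⟨a, -, b, -, rfl⟩
    exact dist_nonneg
  have hD0 : 0 < D := by
    obtain ⟨a, ha, b, hb, hab⟩ := hinf₂.nontrivial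
    calc (0:ℝ) < dist a b := dist_pos.mpr hab
      _ ≤ D := Metric.dist_le_diam_of_mem h₂.isBounded ha hb
  have hδ0 : 0 < δ := lt_trans hD0 hsep
  have hc : 0 < D ^ (-s) - δ ^ (-s) :=
    sub_pos.mpr (Real.rpow_lt_rpow_of_neg hD0 hsep (neg_lt_zero.mpr hs))
  rw [Filter.tendsto_atTop_atTop]
  intro M
  -- M+1 well-separated points of B₁
  obtain ⟨T, hTB₁, hTcard⟩ := hinf₁.exists_subset_card_eq (M + 1)
  have hηex : ∃ η > 0, ∀ a ∈ T, ∀ b ∈ T, a ≠ b → η ≤ dist a b := by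
    rcases (T.offDiag.image fun q => dist q.1 q.2).eq_empty_or_nonempty with h | h
    · refine ⟨1, one_pos, fun a ha b hb hab => ?_⟩
      exfalso
      have hmem : dist a b ∈ (T.offDiag.image fun q => dist q.1 q.2) :=
        Finset.mem_image.mpr ⟨(a, b), Finset.mem_offDiag.mpr ⟨ha, hb, hab⟩, rfl⟩
      rw [h] at hmem
      exact Finset.notMem_empty _ hmem
    · set μ := (T.offDiag.image fun q => dist q.1 q.2).min' h with hμdef
      refine ⟨μ, ?_, fun a ha b hb hab => Finset.min'_le _ _
        (Finset.mem_image.mpr ⟨(a, b), Finset.mem_offDiag.mpr ⟨ha, hb, hab⟩, rfl⟩)⟩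
      obtain ⟨q, hq, hq2⟩ := Finset.mem_image.mp (Finset.min'_mem _ h)
      obtain ⟨hq1, hq2', hqne⟩ := Finset.mem_offDiag.mp hq
      rw [hμdef, ← hq2]
      exact dist_pos.mpr hqne
  obtain ⟨η, hη0, hηsep⟩ := hηex
  -- the threshold
  obtain ⟨N₀, hN₀⟩ := exists_nat_gt ((M : ℝ) + (M * (η/2) ^ (-s)) / (D ^ (-s) - δ ^ (-s)) + 1)
  have hKcomp : IsCompact (B₁ ∪ B₂) := h₁.union h₂
  have hKinf : (B₁ ∪ B₂).Infinite := hinf₁.mono Set.subset_union_left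
  refine ⟨N₀, fun N hN => ?_⟩
  obtain ⟨ωm, hωmK, hωmcard, hωmmin⟩ := exists_min p hs hKcomp hKinf N
  refine le_csInf ⟨_, ωm, hωmK, hωmcard, hωmmin, rfl⟩ ?_
  rintro m ⟨ω, hωK, hωcard, hωmin, rfl⟩
  by_contra hlt
  push_neg at hlt
  -- the finsets of points on B₁ and on B₂
  set A : Finset (EuclideanSpace ℝ (Fin p)) := ω.filter (· ∈ B₁) with hAdef
  set Bf : Finset (EuclideanSpace ℝ (Fin p)) := ω.filter (· ∉ B₁) with hBfdef
  have hAcoe : (↑ω ∩ B₁ : Set (EuclideanSpace ℝ (Fin p))) = ↑A := by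
    ext z
    simp [hAdef, Set.mem_inter_iff]
  have hAcard : (↑ω ∩ B₁ : Set (EuclideanSpace ℝ (Fin p))).ncard = A.card := by
    rw [hAcoe, Set.ncard_coe_finset]
  rw [hAcard] at hlt
  have hAB₁ : ∀ w ∈ A, w ∈ B₁ := fun w hw => (Finset.mem_filter.mp hw).2
  have hBfB₂ : ∀ w ∈ Bf, w ∈ B₂ := by
    intro w hw
    obtain ⟨hwω, hwnB₁⟩ := Finset.mem_filter.mp hw
    rcases hωK hwω with h | h
    · exact absurd h hwnB₁
    · exact h
  have hcards : A.card + Bf.card = N := by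
    rw [hAdef, hBfdef, Finset.card_filter_add_card_filter_not, hωcard]
  -- pigeonhole : a point of T that is η/2-far from every point of A
  have hxex : ∃ x ∈ T, ∀ q ∈ A, η/2 ≤ dist x q := by
    by_contra hno
    push_neg at hno
    have hno' : ∀ x : EuclideanSpace ℝ (Fin p), ∃ q, x ∈ T → q ∈ A ∧ dist x q < η/2 := by
      intro x
      by_cases hx : x ∈ T
      · obtain ⟨q, hq1, hq2⟩ := hno x hx
        exact ⟨q, fun _ => ⟨hq1, hq2⟩⟩
      · exact ⟨x, fun hxT => absurd hxT hx⟩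
    choose f hf using hno'
    have hcard : A.card < T.card := by
      rw [hTcard]; omega
    obtain ⟨a, ha, b, hb, hab, hfab⟩ :=
      Finset.exists_ne_map_eq_of_card_lt_of_maps_to hcard (fun a ha => (hf a ha).1)
    have : dist a b < η :=
      calc dist a b ≤ dist a (f a) + dist (f a) b := dist_triangle _ _ _
        _ < η/2 + η/2 := by
            rw [dist_comm (f a) b]
            have h2 := (hf b hb).2
            rw [← hfab] at h2
            exact add_lt_add (hf a ha).2 h2
        _ = η := by ring
    exact absurd (hηsep a ha b hb hab) (not_le.mpr this)
  obtain ⟨x, hxT, hxfar⟩ := hxex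
  have hxB₁ : x ∈ B₁ := hTB₁ hxT
  have hxnω : x ∉ ω := by
    intro hxω
    by_cases hxB : x ∈ B₁
    · have hxA : x ∈ A := Finset.mem_filter.mpr ⟨hxω, hxB⟩
      have := hxfar x hxA
      rw [dist_self] at this
      linarith
    · have hxBf : x ∈ Bf := Finset.mem_filter.mpr ⟨hxω, hxB⟩
      have := hδle x hxB₁ x (hBfB₂ x hxBf)
      rw [dist_self] at this
      linarith
  -- there is a point of Bf to move
  have hN1 : (1:ℝ) ≤ (N:ℝ) := by
    have : (0:ℝ) ≤ (M : ℝ) + (M * (η/2) ^ (-s)) / (D ^ (-s) - δ ^ (-s)) := by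
      have h1 : (0:ℝ) ≤ (M * (η/2) ^ (-s)) / (D ^ (-s) - δ ^ (-s)) :=
        div_nonneg (mul_nonneg (Nat.cast_nonneg M) (Real.rpow_nonneg (by linarith) _)) hc.le
      positivity
    have h2 : ((N₀ : ℝ)) ≤ (N : ℝ) := Nat.cast_le.mpr hN
    linarith
  have hBfcard : 2 ≤ Bf.card := by
    by_contra hb
    push_neg at hb
    have h1 : (N:ℝ) = A.card + Bf.card := by exact_mod_cast hcards.symm
    have h2 : (A.card : ℝ) < M := by exact_mod_cast hlt
    have h3 : (Bf.card : ℝ) ≤ 1 := by exact_mod_cast Nat.lt_succ_iff.mp hb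
    have h4 : ((N₀ : ℝ)) ≤ (N : ℝ) := Nat.cast_le.mpr hN
    have h5 : (0:ℝ) ≤ (M * (η/2) ^ (-s)) / (D ^ (-s) - δ ^ (-s)) :=
      div_nonneg (mul_nonneg (Nat.cast_nonneg M) (Real.rpow_nonneg (by linarith) _)) hc.le
    linarith
  obtain ⟨y, hyBf⟩ := Finset.card_pos.mp (by omega : 0 < Bf.card)
  have hyω : y ∈ ω := (Finset.mem_filter.mp hyBf).1
  set σ : Finset (EuclideanSpace ℝ (Fin p)) := ω.erase y with hσdef
  have hxnσ : x ∉ σ := fun h => hxnω (Finset.mem_of_mem_erase h)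
  set ω' : Finset (EuclideanSpace ℝ (Fin p)) := insert x σ with hω'def
  have hω'K : ↑ω' ⊆ B₁ ∪ B₂ := by
    intro z hz
    rcases Finset.mem_insert.mp hz with rfl | hz
    · exact Or.inl hxB₁
    · exact hωK (Finset.mem_of_mem_erase hz)
  have hω'card : ω'.card = N := by
    rw [hω'def, Finset.card_insert_of_notMem hxnσ, hσdef, Finset.card_erase_of_mem hyω,
      hωcard]
    omega
  have hmin := hωmin ω' hω'K hω'card
  rw [rieszEnergy_erase p s ω hyω, hω'def, rieszEnergy_insert p s σ hxnσ] at hmin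
  have hSS : ∑ w ∈ σ, dist y w ^ (-s) ≤ ∑ w ∈ σ, dist x w ^ (-s) := by linarith
  -- decompose σ
  have hynA : y ∉ A := fun h => (Finset.mem_filter.mp hyBf).2 (Finset.mem_filter.mp h).2
  have hσun : σ = A ∪ Bf.erase y := by
    rw [hσdef, ← Finset.filter_union_filter_not_eq (· ∈ B₁) ω, Finset.erase_union_distrib,
      Finset.erase_eq_of_notMem hynA]
  have hdisj : Disjoint A (Bf.erase y) := by
    refine Finset.disjoint_left.mpr fun a ha hb => ?_
    exact (Finset.mem_filter.mp (Finset.mem_of_mem_erase hb)).2 (Finset.mem_filter.mp ha).2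
  -- lower bound for the y-sum
  have hylow : ((Bf.card : ℝ) - 1) * D ^ (-s) ≤ ∑ w ∈ σ, dist y w ^ (-s) := by
    have hsub : Bf.erase y ⊆ σ := by
      rw [hσun]; exact Finset.subset_union_right
    have h1 : ∑ w ∈ Bf.erase y, dist y w ^ (-s) ≤ ∑ w ∈ σ, dist y w ^ (-s) :=
      Finset.sum_le_sum_of_subset_of_nonneg hsub
        (fun w _ _ => Real.rpow_nonneg dist_nonneg _)
    have h2 : ∀ w ∈ Bf.erase y, D ^ (-s) ≤ dist y w ^ (-s) := by
      intro w hw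
      have hwy : w ≠ y := Finset.ne_of_mem_erase hw
      have hd0 : 0 < dist y w := dist_pos.mpr (Ne.symm hwy)
      have hdD : dist y w ≤ D :=
        Metric.dist_le_diam_of_mem h₂.isBounded (hBfB₂ y hyBf)
          (hBfB₂ w (Finset.mem_of_mem_erase hw))
      exact Real.rpow_le_rpow_of_nonpos hd0 hdD (neg_nonpos.mpr hs.le)
    calc ((Bf.card : ℝ) - 1) * D ^ (-s)
        = (Bf.erase y).card * D ^ (-s) := by
          rw [Finset.card_erase_of_mem hyBf]
          congr 1
          have : 1 ≤ Bf.card := by omega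
          push_cast [Nat.cast_sub this]
          ring
      _ = ∑ _w ∈ Bf.erase y, D ^ (-s) := by rw [Finset.sum_const, nsmul_eq_mul]
      _ ≤ ∑ w ∈ Bf.erase y, dist y w ^ (-s) := Finset.sum_le_sum h2
      _ ≤ ∑ w ∈ σ, dist y w ^ (-s) := h1
  -- upper bound for the x-sum
  have hxup : ∑ w ∈ σ, dist x w ^ (-s) ≤
      (M : ℝ) * (η/2) ^ (-s) + ((Bf.card : ℝ) - 1) * δ ^ (-s) := by
    rw [hσun, Finset.sum_union hdisj]
    have hA : ∑ w ∈ A, dist x w ^ (-s) ≤ (M : ℝ) * (η/2) ^ (-s) := by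
      have h1 : ∀ w ∈ A, dist x w ^ (-s) ≤ (η/2) ^ (-s) := fun w hw =>
        Real.rpow_le_rpow_of_nonpos (by linarith) (hxfar w hw) (neg_nonpos.mpr hs.le)
      calc ∑ w ∈ A, dist x w ^ (-s) ≤ ∑ _w ∈ A, (η/2) ^ (-s) := Finset.sum_le_sum h1
        _ = A.card * (η/2) ^ (-s) := by rw [Finset.sum_const, nsmul_eq_mul]
        _ ≤ (M : ℝ) * (η/2) ^ (-s) := by
            have : (A.card : ℝ) ≤ M := by exact_mod_cast hlt.le
            exact mul_le_mul_of_nonneg_right this (Real.rpow_nonneg (by linarith) _)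
    have hB : ∑ w ∈ Bf.erase y, dist x w ^ (-s) ≤ ((Bf.card : ℝ) - 1) * δ ^ (-s) := by
      have h1 : ∀ w ∈ Bf.erase y, dist x w ^ (-s) ≤ δ ^ (-s) := fun w hw =>
        Real.rpow_le_rpow_of_nonpos hδ0
          (hδle x hxB₁ w (hBfB₂ w (Finset.mem_of_mem_erase hw))) (neg_nonpos.mpr hs.le)
      calc ∑ w ∈ Bf.erase y, dist x w ^ (-s) ≤ ∑ _w ∈ Bf.erase y, δ ^ (-s) :=
            Finset.sum_le_sum h1
        _ = (Bf.erase y).card * δ ^ (-s) := by rw [Finset.sum_const, nsmul_eq_mul]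
        _ = ((Bf.card : ℝ) - 1) * δ ^ (-s) := by
            rw [Finset.card_erase_of_mem hyBf]
            congr 1
            have : 1 ≤ Bf.card := by omega
            push_cast [Nat.cast_sub this]
            ring
    linarith
  -- combine
  have hkey : ((Bf.card : ℝ) - 1) * (D ^ (-s) - δ ^ (-s)) ≤ (M : ℝ) * (η/2) ^ (-s) := by
    nlinarith [hylow, hxup, hSS]
  have hfin : ((Bf.card : ℝ) - 1) ≤ (M * (η/2) ^ (-s)) / (D ^ (-s) - δ ^ (-s)) :=
    (le_div_iff₀ hc).mpr hkey
  have h1 : (N:ℝ) = A.card + Bf.card := by exact_mod_cast hcards.symm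
  have h2 : (A.card : ℝ) < M := by exact_mod_cast hlt
  have h4 : ((N₀ : ℝ)) ≤ (N : ℝ) := Nat.cast_le.mpr hN
  linarith
end

section
/- Let B₁, B₂ ⊂ ℝ^p be compact with d(B₁,B₂) > diam(B₂) > 0, let s > 0, L ∈ ℕ, and R > 0. Then for all sufficiently large N the following holds: if ω_N ⊂ B₁∪B₂ has #(ω_N ∩ B₁) = L and there exists r ∈ B₁ with d(r, ω_N) ≥ R, then ω_N is not a minimal N-point s-energy configuration, because the potential at r, U(r) = Σ_{x∈ω_N} |r - x|^{-s} ≤ L·R^{-s} + (N-L)·d(B₁,B₂)^{-s}, is strictly less than the point energy U_j(x_j) = Σ_{x∈ω_N∖{x_j}} |x_j - x|^{-s} ≥ (N-L-1)·diam(B₂)^{-s} of any point x_j ∈ ω_N ∩ B₂. -/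
open scoped Classical

lemma setDist_le' (p : ℕ) (A B : Set (EuclideanSpace ℝ (Fin p))) {x y}
    (hx : x ∈ A) (hy : y ∈ B) : setDist p A B ≤ dist x y := by
  apply csInf_le
  · exact ⟨0, fun d ⟨a, _, b, _, hd⟩ => hd ▸ dist_nonneg⟩
  · exact ⟨x, hx, y, hy, rfl⟩

lemma energy_insert (p : ℕ) (s : ℝ) (a : EuclideanSpace ℝ (Fin p))
    (t : Finset (EuclideanSpace ℝ (Fin p))) (ha : a ∉ t) :
    rieszEnergy p s (insert a t) =
      rieszEnergy p s t + 2 * ∑ y ∈ t, dist a y ^ (-s) := by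
  unfold rieszEnergy
  rw [Finset.sum_insert ha, Finset.erase_insert ha]
  have h1 : ∀ x ∈ t, (∑ y ∈ (insert a t).erase x, dist x y ^ (-s)) =
      dist x a ^ (-s) + ∑ y ∈ t.erase x, dist x y ^ (-s) := by
    intro x hx
    have hxa : x ≠ a := fun h => ha (h ▸ hx)
    rw [Finset.erase_insert_of_ne (Ne.symm hxa),
      Finset.sum_insert (fun h => ha (Finset.erase_subset _ _ h))]
  rw [Finset.sum_congr rfl h1, Finset.sum_add_distrib]
  have : ∑ x ∈ t, dist x a ^ (-s) = ∑ x ∈ t, dist a x ^ (-s) := by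
    simp [dist_comm]
  rw [this]; ring

/-- For large `N`, a configuration leaving an `R`-hole on `B₁` while placing only `L`
points there is not minimal: the potential at the hole is strictly smaller than the
point energy of any point on `B₂`. -/
theorem stmt6 (p : ℕ) (B₁ B₂ : Set (EuclideanSpace ℝ (Fin p)))
    (h₁ : IsCompact B₁) (h₂ : IsCompact B₂)
    (hdiam : 0 < Metric.diam B₂) (hsep : Metric.diam B₂ < setDist p B₁ B₂)
    (s : ℝ) (hs : 0 < s) (L : ℕ) (R : ℝ) (hR : 0 < R) :
    ∃ N₀ : ℕ, ∀ N : ℕ, N₀ ≤ N →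
      ∀ ω : Finset (EuclideanSpace ℝ (Fin p)), ↑ω ⊆ B₁ ∪ B₂ → ω.card = N →
        (↑ω ∩ B₁ : Set (EuclideanSpace ℝ (Fin p))).ncard = L →
        ∀ r ∈ B₁, (∀ x ∈ ω, R ≤ dist r x) →
          ((∑ x ∈ ω, dist r x ^ (-s)) ≤
              (L : ℝ) * R ^ (-s) + ((N : ℝ) - L) * setDist p B₁ B₂ ^ (-s)) ∧
          (∀ xj ∈ ω, xj ∈ B₂ →
            (((N : ℝ) - L - 1) * Metric.diam B₂ ^ (-s) ≤
                ∑ x ∈ ω.erase xj, dist xj x ^ (-s)) ∧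
            (∑ x ∈ ω, dist r x ^ (-s)) < ∑ x ∈ ω.erase xj, dist xj x ^ (-s)) ∧
          ¬ (∀ ω' : Finset (EuclideanSpace ℝ (Fin p)), ↑ω' ⊆ B₁ ∪ B₂ → ω'.card = N →
              rieszEnergy p s ω ≤ rieszEnergy p s ω') := by
  set D := setDist p B₁ B₂ with hDdef
  set δ := Metric.diam B₂ with hδdef
  have hD0 : 0 < D := hdiam.trans hsep
  have hδD : D ^ (-s) < δ ^ (-s) :=
    Real.rpow_lt_rpow_of_neg hdiam hsep (neg_lt_zero.mpr hs)
  have hε : 0 < δ ^ (-s) - D ^ (-s) := sub_pos.mpr hδD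
  set C : ℝ := δ ^ (-s) + L * R ^ (-s) with hCdef
  have hC0 : 0 ≤ C := by
    have := Real.rpow_nonneg hdiam.le (-s)
    have := Real.rpow_nonneg hR.le (-s)
    positivity
  refine ⟨L + 2 + ⌈C / (δ ^ (-s) - D ^ (-s))⌉₊, fun N hN ω hω hcard hL r hr hhole => ?_⟩
  -- disjointness
  have hdisj : ∀ z, z ∈ B₁ → z ∉ B₂ := by
    intro z hz1 hz2
    have := setDist_le' p B₁ B₂ hz1 hz2
    simp only [dist_self] at this
    exact absurd (hD0.trans_le this) (lt_irrefl 0)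
  -- the filtered sets
  set ω₁ := ω.filter (· ∈ B₁) with hω₁
  set ω₂ := ω.filter (· ∉ B₁) with hω₂
  have hω₁card : ω₁.card = L := by
    rw [← hL]
    have : (↑ω ∩ B₁ : Set (EuclideanSpace ℝ (Fin p))) = ↑ω₁ := by
      ext z; simp [hω₁, Finset.mem_filter, Set.mem_inter_iff]
    rw [this, Set.ncard_coe_finset]
  have hω₂card : ω₁.card + ω₂.card = N := by
    rw [hω₁, hω₂, Finset.card_filter_add_card_filter_not, hcard]
  have hLN : L + 2 ≤ N := le_trans (Nat.le_add_right _ _) hN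
  have hω₂card' : (ω₂.card : ℝ) = (N : ℝ) - L := by
    have : ω₂.card = N - L := by omega
    rw [this, Nat.cast_sub (by omega)]
  have hω₂B₂ : ∀ x ∈ ω₂, x ∈ B₂ := by
    intro x hx
    rw [hω₂, Finset.mem_filter] at hx
    rcases hω hx.1 with h | h
    · exact absurd h hx.2
    · exact h
  -- Claim 1
  have claim1 : (∑ x ∈ ω, dist r x ^ (-s)) ≤
      (L : ℝ) * R ^ (-s) + ((N : ℝ) - L) * D ^ (-s) := by
    rw [← Finset.sum_filter_add_sum_filter_not ω (· ∈ B₁)]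
    gcongr ?_ + ?_
    · calc ∑ x ∈ ω₁, dist r x ^ (-s) ≤ ω₁.card • R ^ (-s) := by
            apply Finset.sum_le_card_nsmul
            intro x hx
            exact Real.rpow_le_rpow_of_nonpos hR
              (hhole x (Finset.mem_filter.mp hx).1) (neg_nonpos.mpr hs.le)
        _ = (L : ℝ) * R ^ (-s) := by rw [hω₁card, nsmul_eq_mul]
    · calc ∑ x ∈ ω₂, dist r x ^ (-s) ≤ ω₂.card • D ^ (-s) := by
            apply Finset.sum_le_card_nsmul
            intro x hx
            exact Real.rpow_le_rpow_of_nonpos hD0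
              (setDist_le' p B₁ B₂ hr (hω₂B₂ x hx)) (neg_nonpos.mpr hs.le)
        _ = ((N : ℝ) - L) * D ^ (-s) := by rw [nsmul_eq_mul, hω₂card']
  -- strict middle inequality
  have hmid : (L : ℝ) * R ^ (-s) + ((N : ℝ) - L) * D ^ (-s) <
      ((N : ℝ) - L - 1) * δ ^ (-s) := by
    have hNL : C / (δ ^ (-s) - D ^ (-s)) + 1 ≤ (N : ℝ) - L := by
      have h1 : (⌈C / (δ ^ (-s) - D ^ (-s))⌉₊ : ℝ) + 2 ≤ (N : ℝ) - L := by
        have h0 : L + 2 + ⌈C / (δ ^ (-s) - D ^ (-s))⌉₊ ≤ N := hN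
        have := (Nat.cast_le (α := ℝ)).mpr h0
        push_cast at this ⊢
        linarith
      have h2 : C / (δ ^ (-s) - D ^ (-s)) ≤ ⌈C / (δ ^ (-s) - D ^ (-s))⌉₊ :=
        Nat.le_ceil _
      linarith
    have hA' : C ≤ ((N : ℝ) - L - 1) * (δ ^ (-s) - D ^ (-s)) :=
      (div_le_iff₀ hε).mp (by linarith)
    have hexp : ((N : ℝ) - L - 1) * (δ ^ (-s) - D ^ (-s)) =
        ((N : ℝ) - L - 1) * δ ^ (-s) - ((N : ℝ) - L - 1) * D ^ (-s) := by ring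
    have hD1 : ((N : ℝ) - L) * D ^ (-s) =
        ((N : ℝ) - L - 1) * D ^ (-s) + D ^ (-s) := by ring
    rw [hexp] at hA'
    rw [hCdef] at hA'
    linarith
  -- Claim 2
  have claim2 : ∀ xj ∈ ω, xj ∈ B₂ →
      (((N : ℝ) - L - 1) * δ ^ (-s) ≤ ∑ x ∈ ω.erase xj, dist xj x ^ (-s)) ∧
      (∑ x ∈ ω, dist r x ^ (-s)) < ∑ x ∈ ω.erase xj, dist xj x ^ (-s) := by
    intro xj hxj hxjB₂
    have hxjω₂ : xj ∈ ω₂ := by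
      rw [hω₂, Finset.mem_filter]
      exact ⟨hxj, fun h => hdisj xj h hxjB₂⟩
    have hsub : ω₂.erase xj ⊆ ω.erase xj := by
      apply Finset.erase_subset_erase
      exact Finset.filter_subset _ _
    have hlow : ((N : ℝ) - L - 1) * δ ^ (-s) ≤ ∑ x ∈ ω.erase xj, dist xj x ^ (-s) := by
      calc ((N : ℝ) - L - 1) * δ ^ (-s) = ((ω₂.erase xj).card : ℝ) * δ ^ (-s) := by
            rw [Finset.card_erase_of_mem hxjω₂]
            congr 1
            have : ω₂.card - 1 + 1 = ω₂.card := Nat.succ_pred_eq_of_pos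
              (Finset.card_pos.mpr ⟨xj, hxjω₂⟩)
            have hc : ((ω₂.card - 1 : ℕ) : ℝ) = (ω₂.card : ℝ) - 1 := by
              push_cast [Nat.cast_sub (Nat.one_le_iff_ne_zero.mpr
                (Finset.card_ne_zero_of_mem hxjω₂))]
              ring
            rw [hc, hω₂card']
        _ ≤ ∑ x ∈ ω₂.erase xj, dist xj x ^ (-s) := by
            rw [← nsmul_eq_mul]
            apply Finset.card_nsmul_le_sum
            intro x hx
            have hxne : x ≠ xj := Finset.ne_of_mem_erase hx
            have hxB₂ : x ∈ B₂ := hω₂B₂ x (Finset.mem_of_mem_erase hx)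
            have hdist_pos : 0 < dist xj x := dist_pos.mpr (Ne.symm hxne)
            have hdist_le : dist xj x ≤ δ :=
              Metric.dist_le_diam_of_mem h₂.isBounded hxjB₂ hxB₂
            exact Real.rpow_le_rpow_of_nonpos hdist_pos hdist_le (neg_nonpos.mpr hs.le)
        _ ≤ ∑ x ∈ ω.erase xj, dist xj x ^ (-s) := by
            apply Finset.sum_le_sum_of_subset_of_nonneg hsub
            intro x _ _
            exact Real.rpow_nonneg dist_nonneg _
    exact ⟨hlow, lt_of_le_of_lt claim1 (lt_of_lt_of_le hmid hlow)⟩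
  refine ⟨claim1, claim2, ?_⟩
  -- non-minimality
  intro hmin
  -- pick xj ∈ ω₂
  have hω₂ne : ω₂.Nonempty := by
    rw [← Finset.card_pos]
    omega
  obtain ⟨xj, hxjω₂⟩ := hω₂ne
  have hxj : xj ∈ ω := (Finset.mem_filter.mp hxjω₂).1
  have hxjB₂ : xj ∈ B₂ := hω₂B₂ xj hxjω₂
  have hrω : r ∉ ω := by
    intro h
    have := hhole r h
    simp at this
    linarith
  set t := ω.erase xj with ht
  have hrt : r ∉ t := fun h => hrω (Finset.mem_of_mem_erase h)
  have hxjt : xj ∉ t := Finset.notMem_erase _ _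
  set ω' := insert r t with hω'
  have hω'card : ω'.card = N := by
    rw [hω', Finset.card_insert_of_notMem hrt, ht,
      Finset.card_erase_of_mem hxj, hcard]
    omega
  have hω'sub : ↑ω' ⊆ B₁ ∪ B₂ := by
    intro z hz
    rw [hω', Finset.coe_insert] at hz
    rcases hz with rfl | hz
    · exact Or.inl hr
    · exact hω (Finset.mem_of_mem_erase hz)
  have hE : rieszEnergy p s ω' < rieszEnergy p s ω := by
    have heq : ω = insert xj t := (Finset.insert_erase hxj).symm
    rw [hω', energy_insert p s r t hrt]
    conv_rhs => rw [heq, energy_insert p s xj t hxjt]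
    have h1 : ∑ y ∈ t, dist r y ^ (-s) ≤ ∑ y ∈ ω, dist r y ^ (-s) :=
      Finset.sum_le_sum_of_subset_of_nonneg (Finset.erase_subset _ _)
        (fun x _ _ => Real.rpow_nonneg dist_nonneg _)
    have h2 := (claim2 xj hxj hxjB₂).2
    have h3 : ∑ x ∈ t, dist xj x ^ (-s) = ∑ x ∈ ω.erase xj, dist xj x ^ (-s) := rfl
    linarith
  exact absurd (hmin ω' hω'sub hω'card) (not_le.mpr hE)
end
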